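/- arXiv:2603.20631 — 4 statements merged into one kernel-verified Lean document; each statement's English description precedes it below -/
import Mathlib

section
/- Let C = {(b,w) ∈ ℝ × ℝ^K : ‖w‖_∞ ≤ M|b|} with M > 0, and let λ ≥ 0. If v ≠ 0, then every minimizer (b*, w*) of (b,w) ↦ λ|b| + (1/2)(b - v)² + (1/2)‖w - u‖² over C satisfies b*·v ≥ 0, and b* has the same strict sign as v whenever b* ≠ 0. -/
/-- over the nonconvex set `C = {(b,w) : ‖w‖_∞ ≤ M|b|}`, if v ≠ 0 then every
minimizer of `λ|b| + (1/2)(b − v)² + (1/2)‖w − u‖²` has gate with the same sign as v. -/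
theorem hier_prox_minimizer_sign (K : ℕ) (M lam : ℝ) (hM : 0 < M) (hlam : 0 ≤ lam)
    (u : Fin K → ℝ) (v : ℝ) (hv : v ≠ 0)
    (p : ℝ × (Fin K → ℝ))
    (hfeas : ∀ i, |p.2 i| ≤ M * |p.1|)
    (hmin : ∀ q : ℝ × (Fin K → ℝ), (∀ i, |q.2 i| ≤ M * |q.1|) →
      lam * |p.1| + (1 / 2) * (p.1 - v) ^ 2 + (1 / 2) * ∑ i, (p.2 i - u i) ^ 2 ≤
        lam * |q.1| + (1 / 2) * (q.1 - v) ^ 2 + (1 / 2) * ∑ i, (q.2 i - u i) ^ 2) :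
    0 ≤ p.1 * v ∧ (p.1 ≠ 0 → Real.sign p.1 = Real.sign v) := by
  have h := hmin (-p.1, p.2) (by intro i; simpa [abs_neg] using hfeas i)
  simp only [abs_neg] at h
  have hpv : 0 ≤ p.1 * v := by nlinarith
  refine ⟨hpv, fun hp0 => ?_⟩
  rcases lt_trichotomy p.1 0 with h1 | h1 | h1
  · rcases lt_trichotomy v 0 with h2 | h2 | h2
    · rw [Real.sign_of_neg h1, Real.sign_of_neg h2]
    · exact absurd h2 hv
    · nlinarith
  · exact absurd h1 hp0
  · rcases lt_trichotomy v 0 with h2 | h2 | h2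
    · nlinarith
    · exact absurd h2 hv
    · rw [Real.sign_of_pos h1, Real.sign_of_pos h2]
end

section
/- One-feature Hier-Prox discontinuity: with K = 1, M > 0, λ ≥ 0 and fixed u > 0 with Mu > λ, let b(v) denote the gate component of the minimizer of (b,w) ↦ λ|b| + (1/2)(b-v)² + (1/2)(w-u)² over {|w| ≤ M|b|} (choosing the branch sign(v) ties broken toward +). Then lim_{v↓0} b(v) = (Mu - λ)/(1 + M²) and lim_{v↑0} b(v) = -(Mu - λ)/(1 + M²); in particular v ↦ b(v) is discontinuous at v = 0 and not Lipschitz. -/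
open Filter Set

set_option maxHeartbeats 1000000 in
lemma hier_prox_key (M lam u v b w : ℝ) (hM : 0 < M) (hlam : 0 ≤ lam) (hu : 0 < u)
    (hMu : lam < M * u) (hv : 0 < v) (hvu : M * v < u)
    (hw : |w| ≤ M * |b|)
    (hmin : ∀ b' w' : ℝ, |w'| ≤ M * |b'| →
      lam * |b| + (1 / 2) * (b - v) ^ 2 + (1 / 2) * (w - u) ^ 2 ≤
        lam * |b'| + (1 / 2) * (b' - v) ^ 2 + (1 / 2) * (w' - u) ^ 2) :
    b = (M * u + v - lam) / (1 + M ^ 2) := by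
  set L := (M * u + v - lam) / (1 + M ^ 2) with hLdef
  have hden : (0:ℝ) < 1 + M ^ 2 := by positivity
  have hL1 : (1 + M ^ 2) * L = M * u + v - lam := by
    rw [hLdef]; field_simp
  have hLpos : 0 < L := div_pos (by linarith) hden
  have hMLu : M * L < u := by nlinarith [hL1]
  have habsL : |L| = L := abs_of_pos hLpos
  have hfe : |M * L| ≤ M * |L| := le_of_eq (by rw [abs_mul, abs_of_pos hM])
  have hkey := hmin L (M * L) hfe
  rw [habsL] at hkey
  have hwle : w ≤ M * |b| := le_trans (le_abs_self w) hw
  by_cases hbig : u ≤ M * |b|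
  · exfalso
    have h2 : lam * |b| + (1/2) * (b - v) ^ 2 ≤
        lam * L + (1/2) * (L - v) ^ 2 + (1/2) * (M * L - u) ^ 2 := by
      nlinarith [sq_nonneg (w - u)]
    rcases le_or_gt 0 b with hb | hb
    · rw [abs_of_nonneg hb] at h2 hbig
      have hbL : L < b := by nlinarith
      have hs : (M * b - u) ^ 2 ≤ (M * (b - L)) ^ 2 := by nlinarith
      have hid : lam * b + (1/2) * (b - v) ^ 2 + (1/2) * (u - M * b) ^ 2 =
          (lam * L + (1/2) * (L - v) ^ 2 + (1/2) * (M * L - u) ^ 2)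
            + ((1 + M ^ 2) / 2) * (b - L) ^ 2 := by
        linear_combination (b - L) * hL1
      nlinarith [pow_pos (sub_pos.mpr hbL) 2]
    · rw [abs_of_neg hb] at h2 hbig
      have hid : lam * (-b) + (1/2) * (b - v) ^ 2 + (1/2) * (u + M * b) ^ 2 =
          (lam * L + (1/2) * (L - v) ^ 2 + (1/2) * (M * L - u) ^ 2)
            + ((1 + M ^ 2) / 2) * (b + L) ^ 2 - 2 * b * v := by
        linear_combination (-b - L) * hL1
      have ha0 : (0:ℝ) ≤ -(u + M * b) := by linarith
      have ha1 : -(u + M * b) ≤ -(M * (b + L)) := by nlinarith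
      have hs : (u + M * b) ^ 2 ≤ (M * (b + L)) ^ 2 := by
        nlinarith [mul_self_le_mul_self ha0 ha1]
      have hfin : (1/2) * (b + L) ^ 2 - 2 * b * v ≤ 0 := by nlinarith [hid, h2, hs]
      nlinarith [sq_nonneg (b + L), mul_pos (neg_pos.mpr hb) hv]
  · push_neg at hbig
    have h3 : (u - M * |b|) ^ 2 ≤ (w - u) ^ 2 := by
      have h0 : 0 < u - M * |b| := by linarith
      have h1 : u - M * |b| ≤ u - w := by linarith
      nlinarith
    have h2 : lam * |b| + (1/2) * (b - v) ^ 2 + (1/2) * (u - M * |b|) ^ 2 ≤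
        lam * L + (1/2) * (L - v) ^ 2 + (1/2) * (M * L - u) ^ 2 := by linarith
    rcases le_or_gt 0 b with hb | hb
    · rw [abs_of_nonneg hb] at h2
      have hid : lam * b + (1/2) * (b - v) ^ 2 + (1/2) * (u - M * b) ^ 2 =
          (lam * L + (1/2) * (L - v) ^ 2 + (1/2) * (M * L - u) ^ 2)
            + ((1 + M ^ 2) / 2) * (b - L) ^ 2 := by
        linear_combination (b - L) * hL1
      have h4 : (b - L) ^ 2 ≤ 0 := by
        nlinarith [mul_nonneg (sq_nonneg M) (sq_nonneg (b - L))]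
      have h5 : b - L = 0 := by
        have h6 := le_antisymm h4 (sq_nonneg (b - L))
        exact sq_eq_zero_iff.mp h6
      linarith
    · exfalso
      rw [abs_of_neg hb] at h2
      have hid : lam * (-b) + (1/2) * (b - v) ^ 2 + (1/2) * (u + M * b) ^ 2 =
          (lam * L + (1/2) * (L - v) ^ 2 + (1/2) * (M * L - u) ^ 2)
            + ((1 + M ^ 2) / 2) * (b + L) ^ 2 - 2 * b * v := by
        linear_combination (-b - L) * hL1
      nlinarith [sq_nonneg (b + L), mul_pos (neg_pos.mpr hb) hv,
        mul_nonneg (sq_nonneg M) (sq_nonneg (b + L))]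

/-- one-feature Hier-Prox discontinuity. With K = 1, u > 0, M u > λ, let
`bf v` be the gate component of a global minimizer of
`(b,w) ↦ λ|b| + (1/2)(b−v)² + (1/2)(w−u)²` over `{|w| ≤ M|b|}`, with the tie at v = 0
broken toward the + branch. Then the one-sided limits of `bf` at 0 are
`±(Mu − λ)/(1 + M²)`, so `bf` is discontinuous at 0 and not Lipschitz. -/
theorem hier_prox_discontinuous (M lam u : ℝ) (hM : 0 < M) (hlam : 0 ≤ lam)
    (hu : 0 < u) (hMu : lam < M * u)
    (bf : ℝ → ℝ)
    (hmin : ∀ v : ℝ, ∃ wv : ℝ, |wv| ≤ M * |bf v| ∧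
      ∀ b' w' : ℝ, |w'| ≤ M * |b'| →
        lam * |bf v| + (1 / 2) * (bf v - v) ^ 2 + (1 / 2) * (wv - u) ^ 2 ≤
          lam * |b'| + (1 / 2) * (b' - v) ^ 2 + (1 / 2) * (w' - u) ^ 2)
    (h0 : bf 0 = (M * u - lam) / (1 + M ^ 2)) :
    Filter.Tendsto bf (nhdsWithin 0 (Set.Ioi 0))
        (nhds ((M * u - lam) / (1 + M ^ 2))) ∧
    Filter.Tendsto bf (nhdsWithin 0 (Set.Iio 0))
        (nhds (-((M * u - lam) / (1 + M ^ 2)))) ∧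
    ¬ ContinuousAt bf 0 ∧
    ∀ Kc : NNReal, ¬ LipschitzWith Kc bf := by
  have hden : (0:ℝ) < 1 + M ^ 2 := by positivity
  have hbp : ∀ v : ℝ, 0 < v → M * v < u →
      bf v = (M * u + v - lam) / (1 + M ^ 2) := by
    intro v hv hvu
    obtain ⟨wv, hwv, hm⟩ := hmin v
    exact hier_prox_key M lam u v (bf v) wv hM hlam hu hMu hv hvu hwv hm
  have hbn : ∀ v : ℝ, v < 0 → M * (-v) < u →
      bf v = -((M * u + (-v) - lam) / (1 + M ^ 2)) := by
    intro v hv hvu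
    obtain ⟨wv, hwv, hm⟩ := hmin v
    have h := hier_prox_key M lam u (-v) (-(bf v)) wv hM hlam hu hMu
      (by linarith) hvu (by rwa [abs_neg]) ?_
    · linarith [h]
    · intro b' w' hw'
      have h1 := hm (-b') w' (by rwa [abs_neg])
      have e1 : (-(bf v) - -v) ^ 2 = (bf v - v) ^ 2 := by ring
      have e2 : (-b' - v) ^ 2 = (b' - -v) ^ 2 := by ring
      rw [abs_neg, e1]
      rw [abs_neg, e2] at h1
      exact h1
  have hR : Tendsto bf (nhdsWithin 0 (Ioi 0)) (nhds ((M * u - lam) / (1 + M ^ 2))) := by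
    have hc : Tendsto (fun v : ℝ => (M * u + v - lam) / (1 + M ^ 2))
        (nhdsWithin 0 (Ioi 0)) (nhds ((M * u - lam) / (1 + M ^ 2))) := by
      have h := (Continuous.tendsto (by continuity :
        Continuous (fun v : ℝ => (M * u + v - lam) / (1 + M ^ 2))) 0).mono_left
        (nhdsWithin_le_nhds (s := Ioi (0:ℝ)))
      simpa using h
    refine hc.congr' ?_
    filter_upwards [Ioo_mem_nhdsGT_of_mem (by constructor <;> [rfl; positivity] :
      (0:ℝ) ∈ Ico 0 (u / M))] with v hv
    exact (hbp v hv.1 ((lt_div_iff₀' hM).mp hv.2)).symm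
  have hL : Tendsto bf (nhdsWithin 0 (Iio 0)) (nhds (-((M * u - lam) / (1 + M ^ 2)))) := by
    have hc : Tendsto (fun v : ℝ => -((M * u + -v - lam) / (1 + M ^ 2)))
        (nhdsWithin 0 (Iio 0)) (nhds (-((M * u - lam) / (1 + M ^ 2)))) := by
      have h := (Continuous.tendsto (by continuity :
        Continuous (fun v : ℝ => -((M * u + -v - lam) / (1 + M ^ 2)))) 0).mono_left
        (nhdsWithin_le_nhds (s := Iio (0:ℝ)))
      simpa using h
    refine hc.congr' ?_
    filter_upwards [Ioo_mem_nhdsLT_of_mem (⟨neg_lt_zero.mpr (by positivity), le_refl 0⟩ :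
      (0:ℝ) ∈ Ioc (-(u / M)) 0)] with v hv
    refine (hbn v hv.2 ?_).symm
    have : -v < u / M := by linarith [hv.1]
    calc M * -v < M * (u / M) := by exact (mul_lt_mul_iff_right₀ hM).mpr this
    _ = u := by field_simp
  have hpos : 0 < (M * u - lam) / (1 + M ^ 2) := div_pos (by linarith) hden
  have hnc : ¬ ContinuousAt bf 0 := by
    intro hc
    have h1 : Tendsto bf (nhdsWithin 0 (Iio 0)) (nhds (bf 0)) :=
      (hc.tendsto).mono_left nhdsWithin_le_nhds
    have h2 := tendsto_nhds_unique h1 hL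
    rw [h0] at h2
    linarith
  exact ⟨hR, hL, hnc, fun Kc hK => hnc (hK.continuous.continuousAt)⟩
end

section
/- Closed form for the sparse-group prox: fix v ∈ ℝ, Ũ ∈ ℝ^K, α ≥ 0, λ̄ ≥ 0, β ≥ 0. The unique minimizer of (b, w̃) ↦ (1/2)(b - v)² + (1/2)‖w̃ - Ũ‖² + α|b| + λ̄‖w̃‖₁ + β‖(b, w̃)‖₂ is (b*, w̃*) = κ·(b̃, w̃₀) where b̃ = S_α(v) (soft-threshold), w̃₀ = S_λ̄(Ũ) (coordinatewise soft-threshold), r = √(b̃² + ‖w̃₀‖²), and κ = max(1 - β/r, 0) (with κ = 0 if r = 0). -/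
/-!
The objective is `½‖x - z‖² + f x` with `f` convex, and for any `s` such that `z - s` is a
subgradient of `f` at `s` the expansion of the square gives
`½‖x - z‖² + f x ≥ ½‖s - z‖² + f s + ½‖x - s‖²`, so `s` is the strict minimizer.
For `s = κ • S(z)` the subgradient splits as `(z - S(z)) + (S(z) - κ • S(z))`: coordinatewise,
`z - S(z)` is a subgradient of the weighted `ℓ¹` norm at every nonnegative multiple of `S(z)`
(the optimality condition of scalar soft-thresholding), and `S(z) - κ • S(z)` is a subgradient
of `β‖·‖` at `κ • S(z)` (that of block soft-thresholding). The pair `(b, w̃)` is encoded as the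
vector `Fin.cons b w̃` of `ℝ^(K+1)`.
-/

noncomputable def softThresh (τ u : ℝ) : ℝ := Real.sign u * max (|u| - τ) 0

open scoped RealInnerProductSpace

section SoftThresh

variable {τ : ℝ}

theorem softThresh_cases (hτ : 0 ≤ τ) (z : ℝ) :
    (|z| ≤ τ ∧ softThresh τ z = 0) ∨ (τ < z ∧ softThresh τ z = z - τ) ∨
      (z < -τ ∧ softThresh τ z = z + τ) := by
  unfold softThresh
  rcases le_or_gt |z| τ with h | h
  · exact Or.inl ⟨h, by rw [max_eq_right (by linarith), mul_zero]⟩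
  rw [max_eq_left (sub_pos.2 h).le]
  rcases lt_or_gt_of_ne (abs_pos.1 (hτ.trans_lt h)) with hz | hz
  · rw [abs_of_neg hz] at h ⊢
    exact Or.inr (Or.inr ⟨by linarith, by rw [Real.sign_of_neg hz]; ring⟩)
  · rw [abs_of_pos hz] at h ⊢
    exact Or.inr (Or.inl ⟨h, by rw [Real.sign_of_pos hz]; ring⟩)

theorem abs_sub_softThresh_le (hτ : 0 ≤ τ) (z : ℝ) : |z - softThresh τ z| ≤ τ := by
  rcases softThresh_cases hτ z with ⟨h, hs⟩ | ⟨-, hs⟩ | ⟨-, hs⟩ <;> rw [hs]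
  · simpa using h
  · simp [abs_of_nonneg hτ]
  · simp [abs_of_nonneg hτ]

theorem sub_softThresh_mul_self (hτ : 0 ≤ τ) (z : ℝ) :
    (z - softThresh τ z) * softThresh τ z = τ * |softThresh τ z| := by
  rcases softThresh_cases hτ z with ⟨-, hs⟩ | ⟨h, hs⟩ | ⟨h, hs⟩ <;> rw [hs]
  · simp
  · rw [abs_of_pos (sub_pos.2 h)]; ring
  · rw [abs_of_neg (by linarith)]; ring

end SoftThresh

noncomputable def shrinkFactor (β r : ℝ) : ℝ := if r = 0 then 0 else max (1 - β / r) 0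

section ShrinkFactor

variable {β r : ℝ}

theorem shrinkFactor_nonneg : 0 ≤ shrinkFactor β r := by
  unfold shrinkFactor; split_ifs
  exacts [le_rfl, le_max_right _ _]

theorem shrinkFactor_le_one (hβ : 0 ≤ β) (hr : 0 ≤ r) : shrinkFactor β r ≤ 1 := by
  unfold shrinkFactor; split_ifs
  exacts [zero_le_one, max_le (sub_le_self _ (div_nonneg hβ hr)) zero_le_one]

theorem one_sub_shrinkFactor_mul_le (hβ : 0 ≤ β) (hr : 0 ≤ r) :
    (1 - shrinkFactor β r) * r ≤ β := by
  unfold shrinkFactor; split_ifs with h0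
  · simpa [h0] using hβ
  · have hr' : 0 < r := lt_of_le_of_ne hr (Ne.symm h0)
    calc (1 - max (1 - β / r) 0) * r ≤ (β / r) * r := by
          gcongr; linarith [le_max_left (1 - β / r) 0]
      _ = β := div_mul_cancel₀ β h0

theorem one_sub_shrinkFactor_mul_eq (h : shrinkFactor β r ≠ 0) :
    (1 - shrinkFactor β r) * r = β := by
  unfold shrinkFactor at h ⊢; split_ifs at h ⊢ with h0
  · exact absurd rfl h
  · rw [max_eq_left (not_le.1 fun h' => h (max_eq_right h')).le, sub_sub_cancel,
      div_mul_cancel₀ β h0]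

end ShrinkFactor

section Subgradient

variable {E : Type*} [NormedAddCommGroup E] [InnerProductSpace ℝ E]

def IsSubgradient (f : E → ℝ) (s g : E) : Prop :=
  ∀ x, f s + ⟪g, x - s⟫ ≤ f x

namespace IsSubgradient

theorem add {f f' : E → ℝ} {s g g' : E} (h : IsSubgradient f s g) (h' : IsSubgradient f' s g') :
    IsSubgradient (f + f') s (g + g') := fun x => by
  have := h x
  have := h' x
  simp only [Pi.add_apply, inner_add_left]
  linarith

theorem half_sq_add_lt {f : E → ℝ} {z s x : E} (h : IsSubgradient f s (z - s)) (hx : x ≠ s) :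
    ‖s - z‖ ^ 2 / 2 + f s < ‖x - z‖ ^ 2 / 2 + f x := by
  have hexpand : ‖x - z‖ ^ 2 = ‖x - s‖ ^ 2 - 2 * ⟪z - s, x - s⟫ + ‖s - z‖ ^ 2 := by
    rw [show x - z = (x - s) - (z - s) by abel, norm_sub_sq_real, real_inner_comm,
      norm_sub_rev z s]
  have hpos : 0 < ‖x - s‖ := norm_pos_iff.2 (sub_ne_zero.2 hx)
  have := h x
  nlinarith

theorem pi {ι : Type*} [Fintype ι] {φ : ι → ℝ → ℝ} {s g : EuclideanSpace ℝ ι}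
    (h : ∀ i, IsSubgradient (φ i) (s i) (g i)) :
    IsSubgradient (fun x : EuclideanSpace ℝ ι => ∑ i, φ i (x i)) s g := fun x => by
  rw [PiLp.inner_apply, ← Finset.sum_add_distrib]
  exact Finset.sum_le_sum fun i _ => by simpa using h i (x i)

end IsSubgradient

theorem isSubgradient_mul_norm {τ : ℝ} {s g : E} (hg : ‖g‖ ≤ τ) (hgs : ⟪g, s⟫ = τ * ‖s‖) :
    IsSubgradient (fun x => τ * ‖x‖) s g := fun x => by
  rw [inner_sub_right, hgs, add_sub_cancel]
  exact (real_inner_le_norm g x).trans (mul_le_mul_of_nonneg_right hg (norm_nonneg x))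

theorem isSubgradient_softThresh {τ κ : ℝ} (hτ : 0 ≤ τ) (hκ : 0 ≤ κ) (z : ℝ) :
    IsSubgradient (fun t : ℝ => τ * |t|) (κ * softThresh τ z) (z - softThresh τ z) := by
  simp_rw [← Real.norm_eq_abs]
  refine isSubgradient_mul_norm (abs_sub_softThresh_le hτ z) ?_
  simp only [RCLike.inner_apply, conj_trivial, Real.norm_eq_abs, abs_mul, abs_of_nonneg hκ]
  linear_combination κ * sub_softThresh_mul_self hτ z

theorem isSubgradient_shrinkFactor {β : ℝ} (hβ : 0 ≤ β) (y : E) :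
    IsSubgradient (fun x => β * ‖x‖) (shrinkFactor β ‖y‖ • y) (y - shrinkFactor β ‖y‖ • y) := by
  set κ := shrinkFactor β ‖y‖
  have hκ0 : 0 ≤ κ := shrinkFactor_nonneg
  have hκ1 : 0 ≤ 1 - κ := sub_nonneg.2 (shrinkFactor_le_one hβ (norm_nonneg y))
  rw [show y - κ • y = (1 - κ) • y by rw [sub_smul, one_smul]]
  refine isSubgradient_mul_norm ?_ ?_
  · rw [norm_smul, Real.norm_of_nonneg hκ1]
    exact one_sub_shrinkFactor_mul_le hβ (norm_nonneg y)
  · rw [real_inner_smul_left, real_inner_smul_right, real_inner_self_eq_norm_sq, norm_smul,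
      Real.norm_of_nonneg hκ0]
    rcases eq_or_ne κ 0 with h | h
    · simp [h]
    · rw [← one_sub_shrinkFactor_mul_eq h]; ring

end Subgradient

section SparseGroup

variable {ι : Type*} [Fintype ι]

noncomputable def softThreshVec (τ : ι → ℝ) (z : EuclideanSpace ℝ ι) : EuclideanSpace ℝ ι :=
  WithLp.toLp 2 fun i => softThresh (τ i) (z i)

noncomputable def sparseGroupProx (τ : ι → ℝ) (β : ℝ) (z : EuclideanSpace ℝ ι) :
    EuclideanSpace ℝ ι :=
  shrinkFactor β ‖softThreshVec τ z‖ • softThreshVec τ z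

noncomputable def sparseGroupObjective (τ : ι → ℝ) (β : ℝ) (z x : EuclideanSpace ℝ ι) : ℝ :=
  ‖x - z‖ ^ 2 / 2 + (∑ i, τ i * |x i| + β * ‖x‖)

theorem sparseGroupObjective_prox_lt {τ : ι → ℝ} {β : ℝ} (hτ : ∀ i, 0 ≤ τ i) (hβ : 0 ≤ β)
    {z x : EuclideanSpace ℝ ι} (hx : x ≠ sparseGroupProx τ β z) :
    sparseGroupObjective τ β z (sparseGroupProx τ β z) < sparseGroupObjective τ β z x := by
  set y := softThreshVec τ z
  have hℓ1 : IsSubgradient (fun x : EuclideanSpace ℝ ι => ∑ i, τ i * |x i|)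
      (sparseGroupProx τ β z) (z - y) :=
    IsSubgradient.pi (φ := fun i t => τ i * |t|) fun i =>
      isSubgradient_softThresh (hτ i) shrinkFactor_nonneg (z i)
  have h := hℓ1.add (isSubgradient_shrinkFactor hβ y)
  rw [sub_add_sub_cancel] at h
  exact h.half_sq_add_lt hx

end SparseGroup

section FinCons

variable {K : ℕ}

theorem norm_toLp_cons (a : ℝ) (w : Fin K → ℝ) :
    ‖(WithLp.toLp 2 (Fin.cons a w : Fin (K + 1) → ℝ) : EuclideanSpace ℝ (Fin (K + 1)))‖ =
      √(a ^ 2 + ∑ i, w i ^ 2) := by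
  simp [EuclideanSpace.norm_eq, Fin.sum_univ_succ]

theorem sparseGroupObjective_toLp_cons (α lamBar β v a : ℝ) (U w : Fin K → ℝ) :
    sparseGroupObjective (Fin.cons α fun _ => lamBar) β (WithLp.toLp 2 (Fin.cons v U))
        (WithLp.toLp 2 (Fin.cons a w)) =
      (1 / 2) * (a - v) ^ 2 + (1 / 2) * ∑ i, (w i - U i) ^ 2 + α * |a| + lamBar * ∑ i, |w i| +
        β * √(a ^ 2 + ∑ i, w i ^ 2) := by
  rw [sparseGroupObjective, norm_toLp_cons, EuclideanSpace.real_norm_sq_eq]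
  simp only [Fin.sum_univ_succ, PiLp.sub_apply, Fin.cons_zero, Fin.cons_succ, ← Finset.mul_sum]
  ring

theorem sparseGroupProx_toLp_cons (α lamBar β v : ℝ) (U : Fin K → ℝ) :
    sparseGroupProx (Fin.cons α fun _ => lamBar) β (WithLp.toLp 2 (Fin.cons v U)) =
      let bt := softThresh α v
      let wt : Fin K → ℝ := fun i => softThresh lamBar (U i)
      let κ := shrinkFactor β √(bt ^ 2 + ∑ i, wt i ^ 2)
      WithLp.toLp 2 (Fin.cons (κ * bt) fun i => κ * wt i) := by
  have hy : softThreshVec (Fin.cons α fun _ => lamBar) (WithLp.toLp 2 (Fin.cons v U)) =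
      WithLp.toLp 2 (Fin.cons (softThresh α v) fun i => softThresh lamBar (U i)) := by
    ext i
    refine Fin.cases ?_ (fun j => ?_) i <;> rfl
  rw [sparseGroupProx, hy, norm_toLp_cons]
  ext i
  refine Fin.cases ?_ (fun j => ?_) i <;> rfl

end FinCons

/-- closed form for the sparse-group prox. The unique minimizer of
`(b, w̃) ↦ (1/2)(b−v)² + (1/2)‖w̃−Ũ‖² + α|b| + λ̄‖w̃‖₁ + β‖(b,w̃)‖₂`
is `κ·(S_α(v), S_λ̄(Ũ))` with `r = √(S_α(v)² + ‖S_λ̄(Ũ)‖²)` and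
`κ = max(1 − β/r, 0)` (κ = 0 if r = 0). -/
theorem sparse_group_prox_closed_form (K : ℕ) (v : ℝ) (U : Fin K → ℝ)
    (α lamBar β : ℝ) (hα : 0 ≤ α) (hlam : 0 ≤ lamBar) (hβ : 0 ≤ β) :
    let F : ℝ × (Fin K → ℝ) → ℝ := fun p =>
      (1 / 2) * (p.1 - v) ^ 2 + (1 / 2) * ∑ i, (p.2 i - U i) ^ 2 +
        α * |p.1| + lamBar * ∑ i, |p.2 i| +
        β * Real.sqrt (p.1 ^ 2 + ∑ i, (p.2 i) ^ 2)
    let bt : ℝ := softThresh α v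
    let wt : Fin K → ℝ := fun i => softThresh lamBar (U i)
    let r : ℝ := Real.sqrt (bt ^ 2 + ∑ i, (wt i) ^ 2)
    let κ : ℝ := if r = 0 then 0 else max (1 - β / r) 0
    ∀ p : ℝ × (Fin K → ℝ), p ≠ (κ * bt, fun i => κ * wt i) →
      F (κ * bt, fun i => κ * wt i) < F p := by
  intro F bt wt r κ p hp
  have hτ : ∀ i, 0 ≤ (Fin.cons α fun _ => lamBar : Fin (K + 1) → ℝ) i :=
    Fin.forall_fin_succ.2 ⟨hα, fun _ => hlam⟩
  have hne : WithLp.toLp 2 (Fin.cons p.1 p.2) ≠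
      sparseGroupProx (Fin.cons α fun _ => lamBar) β (WithLp.toLp 2 (Fin.cons v U)) := by
    rw [sparseGroupProx_toLp_cons, Ne, (WithLp.toLp_injective 2).eq_iff, Fin.cons_inj]
    exact fun h => hp (Prod.ext h.1 h.2)
  have h := sparseGroupObjective_prox_lt hτ hβ hne
  rwa [sparseGroupProx_toLp_cons, sparseGroupObjective_toLp_cons,
    sparseGroupObjective_toLp_cons] at h
end

section
/- Master recursion under proximal-PL: let f be L-smooth, Ω proper closed convex, 0 < η ≤ 1/(2L). Let x_{t+1} = prox_Ω(x_t - η g_t) where g_t = ∇f(x_t) + ξ_t with E[ξ_t | x_t] = 0 and E[‖ξ_t‖² | x_t] ≤ σ². Set F = ηf + Ω, F* = inf F, G(x) = x - prox_Ω(x - η∇f(x)), and assume the proximal-PL inequality (1/2)‖G(x)‖² ≥ μ(F(x) - F*) for all x, with μ > 0. Then Δ_t = E[F(x_t) - F*] satisfies Δ_{t+1} ≤ (1 - μ(1 - ηL)/4)·Δ_t + η²σ²·((1 - ηL)/4 + 1/(1 - ηL)). -/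
/-!
Proximal minimality plus convexity of `Ω` make `z - prox z` a subgradient of `Ω` at `prox z`, so
the prox is firmly nonexpansive and the stochastic step `x'` lies within `η‖ξ‖` of the
deterministic step `x̄`. Smoothness gives a descent of `F = ηf + Ω` by `(1 - ηL)/2 ‖x - x'‖²` up
to the noise term `η⟪ξ, x - x'⟫`; Young's inequality absorbs half of the descent into that term.
The remaining quarter is compared with the gradient mapping `x - x̄`, which the proximal-PL
inequality bounds below by the gap `F x - F*`. Integrating and bounding `E‖ξ‖²` through its
conditional expectation gives the recursion.
-/

open MeasureTheory Filter Set
open scoped RealInnerProductSpace Topology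

lemma le_of_forall_mem_Ioo_le_add_mul {a b c : ℝ} (h : ∀ t ∈ Ioo (0 : ℝ) 1, a ≤ b + t * c) :
    a ≤ b := by
  have hlim : Tendsto (fun t : ℝ => b + t * c) (𝓝[>] 0) (𝓝 b) := by
    have hcont : Continuous fun t : ℝ => b + t * c := by fun_prop
    simpa using (hcont.tendsto 0).mono_left nhdsWithin_le_nhds
  exact ge_of_tendsto hlim (eventually_of_mem (Ioo_mem_nhdsGT one_pos) h)

lemma real_inner_le_young {E : Type*} [NormedAddCommGroup E] [InnerProductSpace ℝ E]
    {β : ℝ} (hβ : 0 < β) (u v : E) : ⟪u, v⟫ ≤ β / 4 * ‖v‖ ^ 2 + ‖u‖ ^ 2 / β := by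
  have hcs := real_inner_le_norm u v
  have hamgm : ‖u‖ * ‖v‖ ≤ β / 4 * ‖v‖ ^ 2 + ‖u‖ ^ 2 / β := by
    rw [← sub_nonneg]
    have hsq : 0 ≤ (β * ‖v‖ - 2 * ‖u‖) ^ 2 / (4 * β) := by positivity
    convert hsq using 1
    field_simp
    ring
  linarith

section Prox

variable {E : Type*} [NormedAddCommGroup E] [InnerProductSpace ℝ E]

def IsProxMap (Ω : E → ℝ) (prox : E → E) : Prop :=
  ∀ z y, Ω (prox z) + (1 / 2) * ‖prox z - z‖ ^ 2 ≤ Ω y + (1 / 2) * ‖y - z‖ ^ 2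

variable {Ω : E → ℝ} {prox : E → E}

theorem IsProxMap.add_inner_le (hΩ : ConvexOn ℝ univ Ω) (hprox : IsProxMap Ω prox) (z y : E) :
    Ω (prox z) + ⟪z - prox z, y - prox z⟫ ≤ Ω y := by
  set p := prox z
  refine le_of_forall_mem_Ioo_le_add_mul (c := ‖y - p‖ ^ 2 / 2) fun t ⟨ht0, ht1⟩ => ?_
  have hseg : p + t • (y - p) = (1 - t) • p + t • y := by module
  have hconv : Ω (p + t • (y - p)) ≤ (1 - t) * Ω p + t * Ω y := by
    simpa only [hseg, smul_eq_mul] using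
      hΩ.2 (mem_univ p) (mem_univ y) (by linarith) ht0.le (by ring)
  have hmin := hprox z (p + t • (y - p))
  have hexpand : ‖p + t • (y - p) - z‖ ^ 2 =
      ‖p - z‖ ^ 2 - 2 * t * ⟪z - p, y - p⟫ + t ^ 2 * ‖y - p‖ ^ 2 := by
    rw [show p + t • (y - p) - z = t • (y - p) - (z - p) by module, norm_sub_sq_real,
      real_inner_smul_left, norm_smul, Real.norm_eq_abs, abs_of_pos ht0, real_inner_comm,
      norm_sub_rev z p]
    ring
  have hscaled : t * (Ω p + ⟪z - p, y - p⟫) ≤ t * (Ω y + t * (‖y - p‖ ^ 2 / 2)) := by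
    rw [hexpand] at hmin
    linarith
  exact le_of_mul_le_mul_left hscaled ht0

theorem IsProxMap.norm_sub_sq_le_inner (hΩ : ConvexOn ℝ univ Ω) (hprox : IsProxMap Ω prox)
    (z w : E) : ‖prox z - prox w‖ ^ 2 ≤ ⟪z - w, prox z - prox w⟫ := by
  have hz := hprox.add_inner_le hΩ z (prox w)
  have hw := hprox.add_inner_le hΩ w (prox z)
  have hsum : ⟪z - w, prox z - prox w⟫ - ‖prox z - prox w‖ ^ 2 =
      -⟪z - prox z, prox w - prox z⟫ - ⟪w - prox w, prox z - prox w⟫ := by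
    rw [← real_inner_self_eq_norm_sq, ← neg_sub (prox z) (prox w), inner_neg_right,
      ← sub_eq_zero]
    simp only [inner_sub_left, inner_sub_right, real_inner_comm]
    ring
  linarith

theorem IsProxMap.norm_sub_le (hΩ : ConvexOn ℝ univ Ω) (hprox : IsProxMap Ω prox) (z w : E) :
    ‖prox z - prox w‖ ≤ ‖z - w‖ := by
  have hfirm := hprox.norm_sub_sq_le_inner hΩ z w
  have hcs := real_inner_le_norm (z - w) (prox z - prox w)
  nlinarith [norm_nonneg (prox z - prox w), norm_nonneg (z - w)]

theorem IsProxMap.norm_sub_prox_sq_le (hΩ : ConvexOn ℝ univ Ω) (hprox : IsProxMap Ω prox)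
    {η : ℝ} (x g ξ : E) :
    ‖x - prox (x - η • g)‖ ^ 2 ≤ 2 * ‖x - prox (x - η • (g + ξ))‖ ^ 2 + 2 * η ^ 2 * ‖ξ‖ ^ 2 := by
  have hnoise : ‖prox (x - η • (g + ξ)) - prox (x - η • g)‖ ≤ |η| * ‖ξ‖ := by
    simpa [show x - η • (g + ξ) - (x - η • g) = -(η • ξ) by module, norm_smul] using
      hprox.norm_sub_le hΩ (x - η • (g + ξ)) (x - η • g)
  have htri := norm_sub_le_norm_sub_add_norm_sub x (prox (x - η • (g + ξ))) (prox (x - η • g))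
  calc ‖x - prox (x - η • g)‖ ^ 2
      ≤ (‖x - prox (x - η • (g + ξ))‖ + |η| * ‖ξ‖) ^ 2 := by gcongr; linarith
    _ ≤ 2 * (‖x - prox (x - η • (g + ξ))‖ ^ 2 + (|η| * ‖ξ‖) ^ 2) := add_sq_le
    _ = 2 * ‖x - prox (x - η • (g + ξ))‖ ^ 2 + 2 * η ^ 2 * ‖ξ‖ ^ 2 := by rw [mul_pow, sq_abs]; ring

variable {f : E → ℝ} {f' : E → E} {L η : ℝ} {x x' ξ : E}

theorem IsProxMap.descent (hprox : IsProxMap Ω prox) (hη : 0 ≤ η)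
    (hsmooth : ∀ y, f y ≤ f x + ⟪f' x, y - x⟫ + (L / 2) * ‖y - x‖ ^ 2)
    (hx' : x' = prox (x - η • (f' x + ξ))) :
    η * f x' + Ω x' ≤
      η * f x + Ω x - (1 - η * L) / 2 * ‖x - x'‖ ^ 2 + η * ⟪ξ, x - x'⟫ := by
  have hmin := hprox (x - η • (f' x + ξ)) x
  rw [← hx', show x' - (x - η • (f' x + ξ)) = η • (f' x + ξ) - (x - x') by module,
    show x - (x - η • (f' x + ξ)) = η • (f' x + ξ) by module, norm_sub_sq_real,
    real_inner_smul_left, inner_add_left] at hmin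
  have hstep := mul_le_mul_of_nonneg_left (hsmooth x') hη
  rw [show x' - x = -(x - x') by abel, inner_neg_right, norm_neg] at hstep
  linarith

theorem IsProxMap.one_step_prox_PL (hΩ : ConvexOn ℝ univ Ω) (hprox : IsProxMap Ω prox)
    {μPL Fstar : ℝ} (hη : 0 < η) (hβ : 0 < 1 - η * L)
    (hsmooth : ∀ y, f y ≤ f x + ⟪f' x, y - x⟫ + (L / 2) * ‖y - x‖ ^ 2)
    (hPL : μPL * (η * f x + Ω x - Fstar) ≤ (1 / 2) * ‖x - prox (x - η • f' x)‖ ^ 2)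
    (hx' : x' = prox (x - η • (f' x + ξ))) :
    η * f x' + Ω x' - Fstar ≤
      (1 - μPL * (1 - η * L) / 4) * (η * f x + Ω x - Fstar) +
        η ^ 2 * ((1 - η * L) / 4 + 1 / (1 - η * L)) * ‖ξ‖ ^ 2 := by
  have hdesc := hprox.descent hη.le hsmooth hx'
  have hyoung := real_inner_le_young hβ (η • ξ) (x - x')
  rw [real_inner_smul_left, norm_smul, Real.norm_eq_abs, abs_of_pos hη] at hyoung
  have hgap := hprox.norm_sub_prox_sq_le hΩ (η := η) x (f' x) ξ
  rw [← hx'] at hgap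
  have hPL' := mul_le_mul_of_nonneg_left hPL (by linarith : 0 ≤ (1 - η * L) / 4)
  have hgap' := mul_le_mul_of_nonneg_left hgap (by linarith : 0 ≤ (1 - η * L) / 8)
  have hsplit : η ^ 2 * ((1 - η * L) / 4 + 1 / (1 - η * L)) * ‖ξ‖ ^ 2 =
      (1 - η * L) / 4 * (η ^ 2 * ‖ξ‖ ^ 2) + (η * ‖ξ‖) ^ 2 / (1 - η * L) := by
    field_simp
  linarith

end Prox

theorem integral_le_of_condExp_le {W : Type*} {m m₀ : MeasurableSpace W} {μ : Measure W}
    [IsProbabilityMeasure μ] (hm : m ≤ m₀) {g : W → ℝ} {c : ℝ}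
    (hg : ∀ᵐ ω ∂μ, μ[g | m] ω ≤ c) : ∫ ω, g ω ∂μ ≤ c := by
  have := integral_mono_ae integrable_condExp (integrable_const c) hg
  rwa [integral_condExp hm, integral_const, probReal_univ, one_smul] at this

theorem master_recursion_prox_PL_general (n : ℕ)
    (f : EuclideanSpace ℝ (Fin n) → ℝ)
    (f' : EuclideanSpace ℝ (Fin n) → EuclideanSpace ℝ (Fin n))
    (Ω : EuclideanSpace ℝ (Fin n) → ℝ)
    (L η σ μPL Fstar : ℝ)
    (hL : 0 < L) (hη : 0 < η) (hη2 : η ≤ 1 / (2 * L))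
    (hsmooth : ∀ x y, f y ≤ f x + (inner ℝ (f' x) (y - x) : ℝ) + (L / 2) * ‖y - x‖ ^ 2)
    (hΩconv : ConvexOn ℝ Set.univ Ω)
    (prox : EuclideanSpace ℝ (Fin n) → EuclideanSpace ℝ (Fin n))
    (hprox : ∀ z y, Ω (prox z) + (1 / 2) * ‖prox z - z‖ ^ 2 ≤
      Ω y + (1 / 2) * ‖y - z‖ ^ 2)
    (F : EuclideanSpace ℝ (Fin n) → ℝ) (hF : F = fun p => η * f p + Ω p)
    (hPL : ∀ p, μPL * (F p - Fstar) ≤ (1 / 2) * ‖p - prox (p - η • f' p)‖ ^ 2)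
    {W : Type*} [MeasurableSpace W] (μ : Measure W) [IsProbabilityMeasure μ]
    (xt ξ xt1 : W → EuclideanSpace ℝ (Fin n))
    (hxt : Measurable xt)
    (hvar : ∀ᵐ ω ∂μ,
      (μ[(fun ω' => ‖ξ ω'‖ ^ 2) | MeasurableSpace.comap xt inferInstance]) ω ≤ σ ^ 2)
    (hupd : ∀ ω, xt1 ω = prox (xt ω - η • (f' (xt ω) + ξ ω)))
    (hintF : Integrable (fun ω => F (xt ω)) μ)
    (hintF1 : Integrable (fun ω => F (xt1 ω)) μ)
    (hintξ : Integrable (fun ω => ‖ξ ω‖ ^ 2) μ) :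
    ∫ ω, (F (xt1 ω) - Fstar) ∂μ ≤
      (1 - μPL * (1 - η * L) / 4) * ∫ ω, (F (xt ω) - Fstar) ∂μ +
        η ^ 2 * σ ^ 2 * ((1 - η * L) / 4 + 1 / (1 - η * L)) := by
  subst hF
  beta_reduce at hintF hintF1 hPL ⊢
  have hβ : 0 < 1 - η * L := by
    rw [le_div_iff₀ (by positivity)] at hη2
    nlinarith
  set C := η ^ 2 * ((1 - η * L) / 4 + 1 / (1 - η * L)) with hCdef
  have hC : 0 ≤ C := by have := one_div_pos.2 hβ; positivity
  have hnoise : ∫ ω, ‖ξ ω‖ ^ 2 ∂μ ≤ σ ^ 2 := integral_le_of_condExp_le hxt.comap_le hvar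
  have hintGap : Integrable (fun ω => η * f (xt ω) + Ω (xt ω) - Fstar) μ :=
    hintF.sub (integrable_const Fstar)
  calc ∫ ω, (η * f (xt1 ω) + Ω (xt1 ω) - Fstar) ∂μ
      ≤ ∫ ω, ((1 - μPL * (1 - η * L) / 4) * (η * f (xt ω) + Ω (xt ω) - Fstar) +
          C * ‖ξ ω‖ ^ 2) ∂μ :=
        integral_mono (hintF1.sub (integrable_const Fstar))
          ((hintGap.const_mul _).add (hintξ.const_mul C)) fun ω =>
          IsProxMap.one_step_prox_PL hΩconv hprox hη hβ (hsmooth (xt ω)) (hPL (xt ω)) (hupd ω)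
    _ = (1 - μPL * (1 - η * L) / 4) * ∫ ω, (η * f (xt ω) + Ω (xt ω) - Fstar) ∂μ +
          C * ∫ ω, ‖ξ ω‖ ^ 2 ∂μ := by
        rw [integral_add (hintGap.const_mul _) (hintξ.const_mul C), integral_const_mul,
          integral_const_mul]
    _ ≤ (1 - μPL * (1 - η * L) / 4) * ∫ ω, (η * f (xt ω) + Ω (xt ω) - Fstar) ∂μ +
          C * σ ^ 2 := by gcongr
    _ = _ := by rw [hCdef]; ring

/-- master recursion under proximal-PL. With F = ηf + Ω, F* = inf F,
G(x) = x − prox_Ω(x − η∇f(x)), proximal-PL constant μPL > 0, unbiased gradient noise ξ with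
conditional second moment ≤ σ², and update x_{t+1} = prox_Ω(x_t − η(∇f(x_t) + ξ)), the
expected gaps satisfy
`Δ_{t+1} ≤ (1 − μPL(1 − ηL)/4)·Δ_t + η²σ²·((1 − ηL)/4 + 1/(1 − ηL))`. -/
theorem master_recursion_prox_PL (n : ℕ)
    (f : EuclideanSpace ℝ (Fin n) → ℝ)
    (f' : EuclideanSpace ℝ (Fin n) → EuclideanSpace ℝ (Fin n))
    (Ω : EuclideanSpace ℝ (Fin n) → ℝ)
    (L η σ μPL Fstar : ℝ)
    (hL : 0 < L) (hη : 0 < η) (hη2 : η ≤ 1 / (2 * L)) (hμ : 0 < μPL)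
    (hgrad : ∀ x, HasGradientAt f (f' x) x)
    (hsmooth : ∀ x y, f y ≤ f x + (inner ℝ (f' x) (y - x) : ℝ) + (L / 2) * ‖y - x‖ ^ 2)
    (hΩconv : ConvexOn ℝ Set.univ Ω) (hΩlsc : LowerSemicontinuous Ω)
    (prox : EuclideanSpace ℝ (Fin n) → EuclideanSpace ℝ (Fin n))
    (hprox : ∀ z y, Ω (prox z) + (1 / 2) * ‖prox z - z‖ ^ 2 ≤
      Ω y + (1 / 2) * ‖y - z‖ ^ 2)
    (F : EuclideanSpace ℝ (Fin n) → ℝ) (hF : F = fun p => η * f p + Ω p)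
    (hFstar : ∀ p, Fstar ≤ F p)
    (hPL : ∀ p, μPL * (F p - Fstar) ≤ (1 / 2) * ‖p - prox (p - η • f' p)‖ ^ 2)
    {W : Type*} [MeasurableSpace W] (μ : Measure W) [IsProbabilityMeasure μ]
    (xt ξ xt1 : W → EuclideanSpace ℝ (Fin n))
    (hxt : Measurable xt) (hξ : Measurable ξ)
    (hmean : μ[ξ | MeasurableSpace.comap xt inferInstance] =ᵐ[μ] 0)
    (hvar : ∀ᵐ ω ∂μ,
      (μ[(fun ω' => ‖ξ ω'‖ ^ 2) | MeasurableSpace.comap xt inferInstance]) ω ≤ σ ^ 2)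
    (hupd : ∀ ω, xt1 ω = prox (xt ω - η • (f' (xt ω) + ξ ω)))
    (hintF : Integrable (fun ω => F (xt ω)) μ)
    (hintF1 : Integrable (fun ω => F (xt1 ω)) μ)
    (hintξ : Integrable (fun ω => ‖ξ ω‖ ^ 2) μ) :
    ∫ ω, (F (xt1 ω) - Fstar) ∂μ ≤
      (1 - μPL * (1 - η * L) / 4) * ∫ ω, (F (xt ω) - Fstar) ∂μ +
        η ^ 2 * σ ^ 2 * ((1 - η * L) / 4 + 1 / (1 - η * L)) :=
  master_recursion_prox_PL_general n f f' Ω L η σ μPL Fstar hL hη hη2 hsmooth hΩconv prox hprox F hF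
    hPL μ xt ξ xt1 hxt hvar hupd hintF hintF1 hintξ
end
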